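/- arXiv:0811.0561 — 3 statements merged into one kernel-verified Lean document; each statement's English description precedes it below -/
import Mathlib

section
/- Let Γ be a ring. If I is an indecomposable injective Γ-module, then End_Γ(I) is a local ring. -/
section Aux

variable {Γ : Type*} [Ring Γ] {I : Type*} [AddCommGroup I] [Module Γ I]

/-- An injective endomorphism of an indecomposable injective module is a unit. -/
lemma aux_unit_of_injective (hinj : Module.Injective Γ I) (hne : Nontrivial I)
    (hind : ∀ A B : Submodule Γ I, IsCompl A B → A = ⊥ ∨ B = ⊥)
    (f : Module.End Γ I) (hf : Function.Injective f) : IsUnit f := by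
  obtain ⟨h, hh⟩ := hinj.out f hf (LinearMap.id : I →ₗ[Γ] I)
  -- hh : ∀ x, h (f x) = x
  have hfh : ∀ x, f (h (f x)) = f x := fun x => by rw [hh]; rfl
  set e : Module.End Γ I := f ∘ₗ h with he
  have hee : ∀ x, e (e x) = e x := by
    intro x
    simp only [he, LinearMap.comp_apply]
    rw [hh]; rfl
  have hcompl : IsCompl (LinearMap.range e) (LinearMap.ker e) := by
    apply IsCompl.of_eq
    · apply Submodule.eq_bot_iff _ |>.2
      rintro x ⟨⟨y, rfl⟩, hx2⟩
      simpa [hee y] using hx2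
    · rw [eq_top_iff]
      intro x _
      have : x = e x + (x - e x) := by abel
      rw [this]
      refine Submodule.add_mem_sup ⟨x, rfl⟩ ?_
      simp [LinearMap.mem_ker, map_sub, hee x]
  rcases hind _ _ hcompl with hbot | hbot
  · exfalso
    obtain ⟨x, hx⟩ := exists_ne (0 : I)
    have hfx : f x ∈ LinearMap.range e := ⟨f x, by simp [he, hfh]⟩
    rw [hbot, Submodule.mem_bot] at hfx
    exact hx (hf (by simpa using hfx))
  · -- ker e = ⊥, deduce e = 1
    have heid : ∀ x, e x = x := by
      intro x
      have : x - e x ∈ LinearMap.ker e := by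
        simp [LinearMap.mem_ker, map_sub, hee x]
      rw [hbot, Submodule.mem_bot, sub_eq_zero] at this
      exact this.symm
    refine ⟨⟨f, h, ?_, ?_⟩, rfl⟩
    · ext x; exact heid x
    · ext x; exact hh x

/-- An indecomposable injective module is uniform: two nonzero submodules intersect. -/
lemma aux_uniform (hinj : Module.Injective Γ I) (hne : Nontrivial I)
    (hind : ∀ A B : Submodule Γ I, IsCompl A B → A = ⊥ ∨ B = ⊥)
    (A B : Submodule Γ I) (hA : A ≠ ⊥) (hB : B ≠ ⊥) : A ⊓ B ≠ ⊥ := by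
  intro hAB
  classical
  -- essentiality predicate
  set Ess : Submodule Γ I → Prop :=
    fun D => A ≤ D ∧ ∀ x ∈ D, x ≠ 0 → (Submodule.span Γ {x}) ⊓ A ≠ ⊥ with hEss
  -- A itself satisfies Ess
  have hAess : Ess A := by
    refine ⟨le_rfl, fun x hx hx0 hcon => hx0 ?_⟩
    have : x ∈ Submodule.span Γ {x} ⊓ A :=
      ⟨Submodule.mem_span_singleton_self x, hx⟩
    rw [hcon, Submodule.mem_bot] at this
    exact this
  -- Zorn: maximal essential extension E of A
  obtain ⟨E, hAE, hEmax⟩ := zorn_le_nonempty₀ (setOf Ess) (fun c hcs hc y hy => by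
      refine ⟨sSup c, ⟨?_, ?_⟩, fun z hz => le_sSup hz⟩
      · exact le_trans (hcs hy).1 (le_sSup hy)
      · intro x hx hx0
        obtain ⟨D, hD, hxD⟩ :=
          (Submodule.mem_sSup_of_directed ⟨y, hy⟩ hc.directedOn).1 hx
        exact (hcs hD).2 x hxD hx0) A hAess
  have hEmem : Ess E := hEmax.1
  have hAleE : A ≤ E := hEmem.1
  have hEessA : ∀ x ∈ E, x ≠ 0 → (Submodule.span Γ {x}) ⊓ A ≠ ⊥ := hEmem.2
  -- E ⊓ B = ⊥
  have hEB : E ⊓ B = ⊥ := by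
    by_contra hEB
    obtain ⟨x, hx, hx0⟩ := Submodule.ne_bot_iff _ |>.1 hEB
    have h1 := hEessA x hx.1 hx0
    apply h1
    rw [← le_bot_iff, ← hAB]
    intro z hz
    have hzx : z ∈ Submodule.span Γ {x} := hz.1
    have : z ∈ B := Submodule.span_le.2 (by simpa using hx.2) hzx
    exact ⟨hz.2, this⟩
  -- Zorn: maximal C ⊇ B with E ⊓ C = ⊥
  obtain ⟨C, hBC, hCmax⟩ := zorn_le_nonempty₀
      {C' : Submodule Γ I | B ≤ C' ∧ E ⊓ C' = ⊥} (fun c hcs hc y hy => by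
      refine ⟨sSup c, ⟨le_trans (hcs hy).1 (le_sSup hy), ?_⟩, fun z hz => le_sSup hz⟩
      apply Submodule.eq_bot_iff _ |>.2
      rintro x ⟨hxE, hxS⟩
      obtain ⟨D, hD, hxD⟩ :=
        (Submodule.mem_sSup_of_directed ⟨y, hy⟩ hc.directedOn).1 hxS
      have := (hcs hD).2
      rw [← Submodule.mem_bot (R := Γ), ← this]
      exact ⟨hxE, hxD⟩) B ⟨le_rfl, hEB⟩
  have hEC : E ⊓ C = ⊥ := hCmax.1.2
  have hBleC : B ≤ C := hCmax.1.1
  -- the map E → I ⧸ C is injective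
  set j : E →ₗ[Γ] I ⧸ C := C.mkQ.comp E.subtype with hj
  have hjinj : Function.Injective j := by
    intro a b hab
    have : ((a : I) - b) ∈ C := by
      rwa [hj, LinearMap.comp_apply, LinearMap.comp_apply, Submodule.mkQ_apply,
        Submodule.mkQ_apply, Submodule.Quotient.eq] at hab
    have h2 : ((a : I) - b) ∈ E ⊓ C := ⟨sub_mem a.2 b.2, this⟩
    rw [hEC, Submodule.mem_bot, sub_eq_zero] at h2
    exact Subtype.ext h2
  obtain ⟨g, hg⟩ := hinj.out j hjinj E.subtype
  set p : Module.End Γ I := g ∘ₗ C.mkQ with hp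
  have hpE : ∀ x ∈ E, p x = x := by
    intro x hx
    have := hg ⟨x, hx⟩
    simpa [hp, hj] using this
  have hpC : ∀ x ∈ C, p x = 0 := by
    intro x hx
    have : C.mkQ x = 0 := by simpa [Submodule.Quotient.mk_eq_zero] using hx
    simp [hp, this]
  have hCker : C ≤ LinearMap.ker p := fun x hx => by
    simp [LinearMap.mem_ker, hpC x hx]
  have hErange : E ≤ LinearMap.range p := fun x hx => ⟨x, hpE x hx⟩
  -- range p satisfies Ess, hence range p ≤ E by maximality
  have hrangeEss : Ess (LinearMap.range p) := by
    refine ⟨le_trans hAleE hErange, ?_⟩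
    rintro x ⟨y, rfl⟩ hx0
    have hyC : y ∉ C := fun hyC => hx0 (hpC y hyC)
    -- T := span y ⊔ C is strictly bigger than C, so E ⊓ T ≠ ⊥ by maximality of C
    set T : Submodule Γ I := Submodule.span Γ {y} ⊔ C with hT
    have hCT : C ≤ T := le_sup_right
    have hTne : ¬ (E ⊓ T = ⊥) := by
      intro hET
      have hTmem : T ∈ {C' : Submodule Γ I | B ≤ C' ∧ E ⊓ C' = ⊥} :=
        ⟨le_trans hBleC hCT, hET⟩
      have : T ≤ C := hCmax.2 hTmem hCT
      exact hyC (this (le_sup_left (a := Submodule.span Γ {y})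
        (Submodule.mem_span_singleton_self y)))
    obtain ⟨e, he, he0⟩ := Submodule.ne_bot_iff _ |>.1 hTne
    obtain ⟨heE, heT⟩ := he
    obtain ⟨u, hu, c, hc, huc⟩ := Submodule.mem_sup.1 heT
    obtain ⟨γ, rfl⟩ := Submodule.mem_span_singleton.1 hu
    -- p e = γ • p y, and p e = e
    have hpe : e = γ • p y := by
      have h1 : p e = e := hpE e heE
      have h2 : p e = γ • p y := by
        rw [← huc, map_add, hpC c hc, add_zero, map_smul]
      rw [← h1, h2]
    have hspan : Submodule.span Γ {e} ≤ Submodule.span Γ {p y} := by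
      rw [Submodule.span_le, Set.singleton_subset_iff, hpe]
      exact Submodule.smul_mem _ γ (Submodule.mem_span_singleton_self _)
    have := hEessA e heE he0
    intro hcon
    apply this
    rw [← le_bot_iff, ← hcon]
    exact inf_le_inf_right A hspan
  have hrangeE : LinearMap.range p = E :=
    le_antisymm (hEmax.2 hrangeEss hErange) hErange
  -- IsCompl E (ker p)
  have hcompl : IsCompl E (LinearMap.ker p) := by
    apply IsCompl.of_eq
    · apply Submodule.eq_bot_iff _ |>.2
      rintro x ⟨hxE, hxk⟩
      simp only [SetLike.mem_coe, LinearMap.mem_ker] at hxE hxk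
      rw [← hpE x hxE, hxk]
    · rw [eq_top_iff]
      intro x _
      have hx : x = p x + (x - p x) := by abel
      rw [hx]
      refine Submodule.add_mem_sup (hrangeE ▸ LinearMap.mem_range_self p x) ?_
      have hpx : p x ∈ E := hrangeE ▸ LinearMap.mem_range_self p x
      simp [LinearMap.mem_ker, map_sub, hpE _ hpx]
  rcases hind _ _ hcompl with hbot | hbot
  · exact hA (le_bot_iff.1 (hbot ▸ hAleE))
  · exact hB (le_bot_iff.1 (hbot ▸ le_trans hBleC hCker))

end Aux

/-- The endomorphism ring of an indecomposable injective module is local. -/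
theorem stmt_8 {Γ : Type*} [Ring Γ] {I : Type*} [AddCommGroup I] [Module Γ I]
    (hinj : Module.Injective Γ I) (hne : Nontrivial I)
    (hind : ∀ A B : Submodule Γ I, IsCompl A B → A = ⊥ ∨ B = ⊥) :
    IsLocalRing (Module.End Γ I) := by
  have hnt : Nontrivial (Module.End Γ I) := by
    obtain ⟨x, hx⟩ := exists_ne (0 : I)
    exact ⟨1, 0, fun h => hx (by simpa using LinearMap.congr_fun h x)⟩
  refine ⟨fun {a b} hab => ?_⟩
  by_cases ha : Function.Injective a
  · exact Or.inl (aux_unit_of_injective hinj hne hind a ha)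
  · right
    have hb : b = 1 - a := by rw [← hab]; abel
    subst hb
    apply aux_unit_of_injective hinj hne hind
    rw [← LinearMap.ker_eq_bot]
    by_contra hker
    have haker : LinearMap.ker a ≠ ⊥ := fun h =>
      ha (LinearMap.ker_eq_bot.1 h)
    have := aux_uniform hinj hne hind _ _ haker hker
    apply this
    apply Submodule.eq_bot_iff _ |>.2
    rintro x ⟨hx1, hx2⟩
    simp only [SetLike.mem_coe, LinearMap.mem_ker] at hx1 hx2
    have : x - a x = 0 := by simpa using hx2
    rw [hx1, sub_zero] at this
    exact this
end

section
/- Let E = (C₂)^n with generators σ₁,…,σₙ, set ρᵢ = σᵢ − 1 ∈ F₂E, and let P = ⊕ F₂E·aᵢ with ψ(aᵢ) = ρᵢ. Then the F₂E-submodule W of ker ψ generated by the elements ρᵢaᵢ (1 ≤ i ≤ n) and ρⱼaᵢ + ρᵢaⱼ (1 ≤ i < j ≤ n) equals ker ψ. -/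
set_option maxHeartbeats 1000000
set_option synthInstance.maxHeartbeats 400000

/-- The elementary abelian `2`-group of rank `n`. -/
abbrev Egrp (n : ℕ) : Type := Multiplicative (Fin n → ZMod 2)

/-- The group algebra `F₂E`. -/
abbrev F2E (n : ℕ) : Type := MonoidAlgebra (ZMod 2) (Egrp n)

/-- The generator `σᵢ` of `E` inside the group algebra. -/
noncomputable abbrev sigmaE (n : ℕ) (i : Fin n) : F2E n :=
  MonoidAlgebra.of (ZMod 2) (Egrp n) (Multiplicative.ofAdd (Pi.single i 1))

/-- `ρᵢ = σᵢ - 1`. -/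
noncomputable abbrev rhoE (n : ℕ) (i : Fin n) : F2E n := sigmaE n i - 1

/-- The augmentation map `F₂E → F₂`, sending every group element to `1`. -/
noncomputable abbrev augE (n : ℕ) : F2E n →ₐ[ZMod 2] ZMod 2 :=
  MonoidAlgebra.lift (ZMod 2) (ZMod 2) (Egrp n) 1

/-!
The products `ρ_T = ∏_{i ∈ T} ρᵢ` (`T ⊆ {1, …, n}`) form an `F₂`-basis of `F₂E`: they span,
since `σ_T = ∏_{i ∈ T} (ρᵢ + 1) = ∑_{S ⊆ T} ρ_S`, and there are `2ⁿ = dim F₂E` of them.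
Modulo `W`, the element `ρ_S aᵢ` vanishes if `i ∈ S`; otherwise, with `T = S ∪ {i}` and
`j = min T`, it is congruent to `m_T = ρ_{T ∖ j} a_j` (`rhoProdLift`), because
`ρ_{T ∖ {i, j}} (ρⱼ aᵢ + ρᵢ aⱼ) ∈ W`. Hence `P = W + span_{F₂} {m_T : T ≠ ∅}`. As
`ψ (m_T) = ρ_T`, the map `ψ` is injective on the second summand, and since `W ⊆ ker ψ`
this forces `ker ψ = W`.
-/

open Finset Submodule
open scoped Pointwise

instance (n : ℕ) : CharP (F2E n) 2 :=
  charP_of_injective_algebraMap (algebraMap (ZMod 2) (F2E n)).injective 2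

lemma sigmaE_mul_self (n : ℕ) (i : Fin n) : sigmaE n i * sigmaE n i = 1 := by
  rw [← map_mul, ← ofAdd_add, ← Pi.single_add, CharTwo.add_self_eq_zero,
    Pi.single_zero, ofAdd_zero, map_one]

lemma rhoE_mul_self (n : ℕ) (i : Fin n) : rhoE n i * rhoE n i = 0 := by
  rw [← sq, rhoE, CharTwo.sub_eq_add, CharTwo.add_sq, sq, sigmaE_mul_self, one_pow,
    CharTwo.add_self_eq_zero]

lemma sigmaE_eq_rhoE_add_one (n : ℕ) (i : Fin n) : sigmaE n i = rhoE n i + 1 :=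
  (sub_add_cancel _ _).symm

noncomputable def rhoProd (n : ℕ) (T : Finset (Fin n)) : F2E n := ∏ i ∈ T, rhoE n i

lemma ofAdd_eq_prod_single (n : ℕ) (v : Fin n → ZMod 2) :
    (Multiplicative.ofAdd v : Egrp n) =
      ∏ i ∈ univ.filter (v · ≠ 0), Multiplicative.ofAdd (Pi.single i 1) := by
  apply Multiplicative.toAdd.injective
  funext j
  simp only [toAdd_prod, toAdd_ofAdd, Finset.sum_apply, Pi.single_apply, sum_ite_eq,
    mem_filter, mem_univ, true_and]
  generalize v j = a
  revert a
  decide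

lemma of_ofAdd_eq_prod_sigmaE (n : ℕ) (v : Fin n → ZMod 2) :
    MonoidAlgebra.of (ZMod 2) (Egrp n) (Multiplicative.ofAdd v) =
      ∏ i ∈ univ.filter (v · ≠ 0), sigmaE n i := by
  rw [ofAdd_eq_prod_single, map_prod]

lemma of_mem_span_rhoProd (n : ℕ) (g : Egrp n) :
    MonoidAlgebra.of (ZMod 2) (Egrp n) g ∈ span (ZMod 2) (Set.range (rhoProd n)) := by
  rw [← ofAdd_toAdd g, of_ofAdd_eq_prod_sigmaE]
  simp only [sigmaE_eq_rhoE_add_one, prod_add, prod_const_one, mul_one]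
  exact sum_mem fun S _ => subset_span ⟨S, rfl⟩

lemma span_rhoProd_eq_top (n : ℕ) : span (ZMod 2) (Set.range (rhoProd n)) = ⊤ :=
  eq_top_iff'.2 fun x => MonoidAlgebra.induction_on x (of_mem_span_rhoProd n)
    (fun _ _ => add_mem) (fun r _ => smul_mem _ r)

lemma finrank_F2E (n : ℕ) : Module.finrank (ZMod 2) (F2E n) = 2 ^ n := by
  rw [(MonoidAlgebra.coeffLinearEquiv (ZMod 2)).finrank_eq, Module.finrank_finsupp_self]
  simp

lemma linearIndependent_rhoProd (n : ℕ) : LinearIndependent (ZMod 2) (rhoProd n) :=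
  linearIndependent_of_top_le_span_of_card_eq_finrank (span_rhoProd_eq_top n).ge
    (by rw [Fintype.card_finset, Fintype.card_fin, finrank_F2E])

def rhoRelations (n : ℕ) : Set (Fin n → F2E n) :=
  {x : Fin n → F2E n | ∃ i : Fin n, x = rhoE n i • (Pi.single i 1 : Fin n → F2E n)} ∪
  {x : Fin n → F2E n | ∃ i j : Fin n, i < j ∧
     x = rhoE n j • (Pi.single i 1 : Fin n → F2E n) +
         rhoE n i • (Pi.single j 1 : Fin n → F2E n)}

lemma span_rhoRelations_le_ker (n : ℕ) (ψ : (Fin n → F2E n) →ₗ[F2E n] F2E n)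
    (hψ : ∀ i : Fin n, ψ (Pi.single i 1) = rhoE n i) :
    span (F2E n) (rhoRelations n) ≤ LinearMap.ker ψ := by
  rw [span_le]
  rintro x (⟨i, rfl⟩ | ⟨i, j, -, rfl⟩) <;>
    simp only [SetLike.mem_coe, LinearMap.mem_ker, map_add, map_smul, hψ, smul_eq_mul]
  · exact rhoE_mul_self n i
  · rw [mul_comm, CharTwo.add_self_eq_zero]

lemma rhoE_smul_single_mem_span (n : ℕ) (i : Fin n) :
    rhoE n i • (Pi.single i 1 : Fin n → F2E n) ∈ span (F2E n) (rhoRelations n) :=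
  subset_span (Or.inl ⟨i, rfl⟩)

lemma rhoE_smul_single_add_mem_span (n : ℕ) {i j : Fin n} (hij : i ≠ j) :
    rhoE n j • (Pi.single i 1 : Fin n → F2E n) + rhoE n i • (Pi.single j 1 : Fin n → F2E n)
      ∈ span (F2E n) (rhoRelations n) := by
  rcases hij.lt_or_gt with h | h
  · exact subset_span (Or.inr ⟨i, j, h, rfl⟩)
  · rw [add_comm]
    exact subset_span (Or.inr ⟨j, i, h, rfl⟩)

lemma rhoProd_smul_single_mem_span_of_mem (n : ℕ) {S : Finset (Fin n)} {i : Fin n}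
    (hi : i ∈ S) :
    rhoProd n S • (Pi.single i 1 : Fin n → F2E n) ∈ span (F2E n) (rhoRelations n) := by
  rw [rhoProd, ← prod_erase_mul _ _ hi, mul_smul]
  exact smul_mem _ _ (rhoE_smul_single_mem_span n i)

lemma rhoProd_erase_smul_single_add_mem_span (n : ℕ) {T : Finset (Fin n)} {i j : Fin n}
    (hi : i ∈ T) (hj : j ∈ T) (hij : i ≠ j) :
    rhoProd n (T.erase i) • (Pi.single i 1 : Fin n → F2E n) +
        rhoProd n (T.erase j) • (Pi.single j 1 : Fin n → F2E n)
      ∈ span (F2E n) (rhoRelations n) := by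
  have hj' : j ∈ T.erase i := mem_erase.2 ⟨hij.symm, hj⟩
  have hi' : i ∈ T.erase j := mem_erase.2 ⟨hij, hi⟩
  rw [rhoProd, rhoProd, ← prod_erase_mul _ _ hj', ← prod_erase_mul _ _ hi', erase_right_comm,
    mul_smul, mul_smul, ← smul_add]
  exact smul_mem _ _ (rhoE_smul_single_add_mem_span n hij)

noncomputable def rhoProdLift (n : ℕ) (T : {T : Finset (Fin n) // T.Nonempty}) :
    Fin n → F2E n :=
  rhoProd n (T.1.erase (T.1.min' T.2)) • Pi.single (T.1.min' T.2) 1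

lemma map_rhoProdLift (n : ℕ) (ψ : (Fin n → F2E n) →ₗ[F2E n] F2E n)
    (hψ : ∀ i : Fin n, ψ (Pi.single i 1) = rhoE n i) (T : {T : Finset (Fin n) // T.Nonempty}) :
    ψ (rhoProdLift n T) = rhoProd n T := by
  rw [rhoProdLift, map_smul, hψ, smul_eq_mul, rhoProd, rhoProd,
    prod_erase_mul _ _ (T.1.min'_mem T.2)]

lemma rhoProd_smul_single_mem_sup (n : ℕ) (S : Finset (Fin n)) (i : Fin n) :
    rhoProd n S • (Pi.single i 1 : Fin n → F2E n) ∈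
      (span (F2E n) (rhoRelations n)).restrictScalars (ZMod 2) ⊔
        span (ZMod 2) (Set.range (rhoProdLift n)) := by
  by_cases hi : i ∈ S
  · exact mem_sup_left (rhoProd_smul_single_mem_span_of_mem n hi)
  set T : {T : Finset (Fin n) // T.Nonempty} := ⟨insert i S, insert_nonempty i S⟩
  have hS : S = T.1.erase i := (erase_insert hi).symm
  have hT : rhoProdLift n T ∈ span (ZMod 2) (Set.range (rhoProdLift n)) := subset_span ⟨T, rfl⟩
  by_cases hmin : T.1.min' T.2 = i
  · rw [hS, ← hmin]
    exact mem_sup_right hT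
  · rw [← add_sub_cancel_right (rhoProd n S • _) (rhoProdLift n T)]
    refine sub_mem (mem_sup_left ?_) (mem_sup_right hT)
    rw [hS]
    exact rhoProd_erase_smul_single_add_mem_span n (mem_insert_self i S) (T.1.min'_mem T.2)
      (Ne.symm hmin)

lemma span_rhoRelations_sup_span_rhoProdLift (n : ℕ) :
    (span (F2E n) (rhoRelations n)).restrictScalars (ZMod 2) ⊔
      span (ZMod 2) (Set.range (rhoProdLift n)) = ⊤ := by
  have hspan : span (ZMod 2)
      (Set.range (rhoProd n) • Set.range (Pi.basisFun (F2E n) (Fin n))) = ⊤ := by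
    rw [span_smul_of_span_eq_top (span_rhoProd_eq_top n), (Pi.basisFun _ _).span_eq,
      restrictScalars_top]
  rw [eq_top_iff, ← hspan, span_le]
  rintro _ ⟨_, ⟨S, rfl⟩, _, ⟨i, rfl⟩, rfl⟩
  rw [Pi.basisFun_apply]
  exact rhoProd_smul_single_mem_sup n S i

lemma disjoint_span_rhoProdLift_ker (n : ℕ) (ψ : (Fin n → F2E n) →ₗ[F2E n] F2E n)
    (hψ : ∀ i : Fin n, ψ (Pi.single i 1) = rhoE n i) :
    Disjoint (span (ZMod 2) (Set.range (rhoProdLift n)))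
      (LinearMap.ker (ψ.restrictScalars (ZMod 2))) := by
  refine range_ker_disjoint ?_
  convert (linearIndependent_rhoProd n).comp _ Subtype.val_injective using 1
  exact funext (map_rhoProdLift n ψ hψ)

/-- The `F₂E`-submodule of `ker ψ` generated by the elements `ρᵢaᵢ` (`1 ≤ i ≤ n`) and
`ρⱼaᵢ + ρᵢaⱼ` (`1 ≤ i < j ≤ n`) is all of `ker ψ = Ω²F₂`. -/
theorem stmt_15 (n : ℕ) (ψ : (Fin n → F2E n) →ₗ[F2E n] F2E n)
    (hψ : ∀ i : Fin n, ψ (Pi.single i 1) = rhoE n i) :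
    Submodule.span (F2E n)
        ({x : Fin n → F2E n | ∃ i : Fin n, x = rhoE n i • (Pi.single i 1 : Fin n → F2E n)} ∪
         {x : Fin n → F2E n | ∃ i j : Fin n, i < j ∧
            x = rhoE n j • (Pi.single i 1 : Fin n → F2E n) +
                rhoE n i • (Pi.single j 1 : Fin n → F2E n)}) =
      LinearMap.ker ψ := by
  change span (F2E n) (rhoRelations n) = _
  refine le_antisymm (span_rhoRelations_le_ker n ψ hψ) fun f hf => ?_
  obtain ⟨w, hw, m, hm, rfl⟩ :=
    mem_sup.1 ((span_rhoRelations_sup_span_rhoProdLift n).ge (mem_top (x := f)))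
  have hwker : ψ w = 0 := span_rhoRelations_le_ker n ψ hψ hw
  have hmker : ψ m = 0 := by simpa [hwker] using hf
  rwa [disjoint_def.1 (disjoint_span_rhoProdLift_ker n ψ hψ) m hm hmker, add_zero]
end

section
/- Let 0 → A →^α B →^β C → 0 be a short exact sequence of modules over a ring Λ, and suppose f : A → A and g : B → B and the identity on C give a morphism of the sequence to itself (β∘g = β, g∘α = α∘f). If f is nilpotent, then β is a split epimorphism. -/
/-!
Some power `g ^ n` kills the image of `α`, because `g ^ n ∘ α = α ∘ f ^ n = 0`, so by exactness it
factors as `s ∘ β`. Since `β ∘ g ^ n = β`, we get `β ∘ s ∘ β = β`, and surjectivity of `β` turns this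
into `β ∘ s = id`.
-/

namespace Function.Exact

variable {R M N P Q : Type*} [Ring R] [AddCommGroup M] [Module R M] [AddCommGroup N] [Module R N]
  [AddCommGroup P] [Module R P] [AddCommGroup Q] [Module R Q]
  {f : M →ₗ[R] N} {g : N →ₗ[R] P}

theorem exists_comp_eq_of_comp_eq_zero (hfg : Function.Exact f g) (hg : Function.Surjective g)
    {k : N →ₗ[R] Q} (hk : k ∘ₗ f = 0) : ∃ s : P →ₗ[R] Q, s ∘ₗ g = k := by
  have hle : LinearMap.range f ≤ LinearMap.ker k := LinearMap.range_le_ker_iff.mpr hk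
  refine ⟨(LinearMap.range f).liftQ k hle ∘ₗ (hfg.linearEquivOfSurjective hg).symm.toLinearMap, ?_⟩
  ext x
  simp

theorem exists_comp_eq_id_of_comp_eq_self (hfg : Function.Exact f g)
    (hg : Function.Surjective g) {e : N →ₗ[R] N} (hef : e ∘ₗ f = 0) (hge : g ∘ₗ e = g) :
    ∃ s : P →ₗ[R] N, g ∘ₗ s = LinearMap.id := by
  obtain ⟨s, hs⟩ := hfg.exists_comp_eq_of_comp_eq_zero hg hef
  refine ⟨s, (LinearMap.cancel_right hg).mp ?_⟩
  rw [LinearMap.comp_assoc, hs, hge, LinearMap.id_comp]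

end Function.Exact

theorem stmt_19_general {Λ : Type*} [Ring Λ] {A B C : Type*}
    [AddCommGroup A] [Module Λ A] [AddCommGroup B] [Module Λ B]
    [AddCommGroup C] [Module Λ C]
    (α : A →ₗ[Λ] B) (β : B →ₗ[Λ] C)
    (hex : Function.Exact α β)
    (hsur : Function.Surjective β)
    (f : A →ₗ[Λ] A) (g : B →ₗ[Λ] B)
    (hcomm₁ : β ∘ₗ g = β) (hcomm₂ : g ∘ₗ α = α ∘ₗ f)
    (hf : IsNilpotent (f : Module.End Λ A)) :
    ∃ s : C →ₗ[Λ] B, β ∘ₗ s = LinearMap.id := by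
  obtain ⟨n, hfn⟩ := hf
  have hgα : (g ^ n) ∘ₗ α = 0 := by
    rw [Module.End.commute_pow_left_of_commute hcomm₂ n, hfn, LinearMap.comp_zero]
  have hβg : β ∘ₗ (g ^ n) = β := by
    have h₁ : (1 : Module.End Λ C) ∘ₗ β = β ∘ₗ g := by
      rw [hcomm₁, Module.End.one_eq_id, LinearMap.id_comp]
    rw [← Module.End.commute_pow_left_of_commute h₁ n, one_pow, Module.End.one_eq_id,
      LinearMap.id_comp]
  exact hex.exists_comp_eq_id_of_comp_eq_self hsur hgα hβg

/-- If `0 → A → B → C → 0` is exact and `(f, g, id_C)` is an endomorphism of the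
sequence with `f` nilpotent, then `β` is a split epimorphism. -/
theorem stmt_19 {Λ : Type*} [Ring Λ] {A B C : Type*}
    [AddCommGroup A] [Module Λ A] [AddCommGroup B] [Module Λ B]
    [AddCommGroup C] [Module Λ C]
    (α : A →ₗ[Λ] B) (β : B →ₗ[Λ] C)
    (hinj : Function.Injective α) (hex : Function.Exact α β)
    (hsur : Function.Surjective β)
    (f : A →ₗ[Λ] A) (g : B →ₗ[Λ] B)
    (hcomm₁ : β ∘ₗ g = β) (hcomm₂ : g ∘ₗ α = α ∘ₗ f)
    (hf : IsNilpotent (f : Module.End Λ A)) :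
    ∃ s : C →ₗ[Λ] B, β ∘ₗ s = LinearMap.id :=
  stmt_19_general α β hex hsur f g hcomm₁ hcomm₂ hf
end
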